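/- arXiv:2303.01350 — 4 statements merged into one kernel-verified Lean document; each statement's English description precedes it below -/
import Mathlib

section
/- The map theta from the free IO monad to the specification monad w is a monad morphism: theta (free_return x) equals w_return x, and theta (free_bind m f) equals w_bind (theta m) (fun x -> theta (f x)). -/
inductive Caller | Prog | Ctx

/-- Operations of the MIO monad: IO operations plus a `GetMState` operation. -/
inductive MOp (iop : Type) : Type
  | io : iop → MOp iop
  | getMState : MOp iop

variable {iop : Type}

section
variable (ioargs : iop → Type) (iores : (o : iop) → ioargs o → Type) (Event : Type)

/-- Argument types of the operations; `GetMState` takes a unit argument. -/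
def margs : MOp iop → Type
  | .io o => ioargs o
  | .getMState => Unit

/-- Result types of the operations; `GetMState` returns the trace. -/
def mres : (op : MOp iop) → margs ioargs op → Type
  | .io o, a => iores o a
  | .getMState, _ => List Event

/-- The free computational monad over the MIO operations. -/
inductive Free (a : Type) : Type where
  | Return : a → Free a
  | Call : Caller → (op : MOp iop) → (arg : margs ioargs op) →
      (mres ioargs iores Event op arg → Free a) → Free a

/-- The specification monad. -/
def W (b : Type) : Type := (List Event → b → Prop) → (List Event → Prop)
end

variable {ioargs : iop → Type} {iores : (o : iop) → ioargs o → Type} {Event : Type}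

def wReturn {b : Type} (x : b) : W (Event := Event) b :=
  fun post _h => post [] x

def wBind {b c : Type} (m : W (Event := Event) b) (f : b → W (Event := Event) c) :
    W (Event := Event) c :=
  fun post h =>
    m (fun lt r => f r (fun lt' r' => post (lt ++ lt') r') (lt.reverse ++ h)) h


def freeBind {a b : Type} :
    Free ioargs iores Event a → (a → Free ioargs iores Event b) →
      Free ioargs iores Event b
  | .Return x, f => f x
  | .Call c op arg k, f => .Call c op arg (fun r => freeBind (k r) f)

variable (ev : Caller → (o : iop) → (a : ioargs o) → iores o a → Event)

/-- Specification of a single operation call: `GetMState` returns the history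
with no new events; an IO operation produces a single corresponding event. -/
def mioWps (c : Caller) :
    (op : MOp iop) → (arg : margs ioargs op) →
      W (Event := Event) (mres ioargs iores Event op arg)
  | .io o, a => fun post _h => ∀ r, post [ev c o a r] r
  | .getMState, _ => fun post h => post [] h

/-- The monad morphism from the free monad to the specification monad. -/
def theta {a : Type} :
    Free ioargs iores Event a → W (Event := Event) a
  | .Return x => wReturn x
  | .Call c op arg k => wBind (mioWps ev c op arg) (fun r => theta (k r))


lemma wBind_wReturn {b c : Type} (x : b) (f : b → W (Event := Event) c) :
    wBind (wReturn x) f = f x := by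
  funext post h
  simp [wBind, wReturn]

lemma wBind_assoc {b c d : Type} (m : W (Event := Event) b)
    (f : b → W (Event := Event) c) (g : c → W (Event := Event) d) :
    wBind (wBind m f) g = wBind m (fun x => wBind (f x) g) := by
  funext post h
  simp only [wBind]
  congr 1
  funext lt r
  congr 1
  funext lt' r'
  congr 1
  · funext lt'' r''
    rw [List.append_assoc]
  · simp [List.reverse_append]

/-- `theta` is a monad morphism: it maps `free_return` to `w_return` and
`free_bind` to `w_bind`. -/
theorem theta_monad_morphism :
    (∀ (a : Type) (x : a),
      theta (ev := ev) (Free.Return x) = wReturn x) ∧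
    (∀ (a b : Type) (m : Free ioargs iores Event a) (f : a → Free ioargs iores Event b),
      theta (ev := ev) (freeBind m f)
        = wBind (theta (ev := ev) m) (fun x => theta (ev := ev) (f x))) := by
  constructor
  · intro a x; rfl
  · intro a b m f
    induction m with
    | Return x => simp [freeBind, theta, wBind_wReturn]
    | Call c op arg k ih =>
      simp only [freeBind, theta, ih, wBind_assoc]
end

section
/- The predicate every_request_gets_a_response is compositional in the following sense: if a trace lt1 satisfies the auxiliary invariant with pending read set fds, and lt2 satisfies it starting from the pending set produced by processing lt1, then lt1 ++ lt2 satisfies the invariant starting from fds. In particular, if every_request_gets_a_response lt1 and every_request_gets_a_response lt2 hold and lt1 leaves no pending reads, then every_request_gets_a_response (lt1 ++ lt2) holds. -/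
/-- Events relevant to the web server invariant: a successful read from a
file descriptor, a failed read, a write to a file descriptor, or any other
event. -/
inductive Ev : Type
  | readOk (fd : ℕ)
  | readErr (fd : ℕ)
  | write (fd : ℕ)
  | other

/-- The auxiliary invariant: processes a trace maintaining the set of pending
(read but unanswered) file descriptors, requiring it to be empty at the end. -/
def aux : List Ev → List ℕ → Prop
  | [], fds => fds = []
  | .readOk fd :: tl, fds => aux tl (fd :: fds)
  | .write fd :: tl, fds => aux tl (fds.filter (fun fd' => decide (fd ≠ fd')))
  | _ :: tl, fds => aux tl fds

/-- The pending read set produced by processing a trace from a given set. -/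
def proc : List Ev → List ℕ → List ℕ
  | [], fds => fds
  | .readOk fd :: tl, fds => proc tl (fd :: fds)
  | .write fd :: tl, fds => proc tl (fds.filter (fun fd' => decide (fd ≠ fd')))
  | _ :: tl, fds => proc tl fds

def everyRequestGetsAResponse (lt : List Ev) : Prop := aux lt []

/-- Compositionality of the `every_request_gets_a_response` invariant. -/
theorem aux_append :
    (∀ (lt1 lt2 : List Ev) (fds : List ℕ),
      aux lt2 (proc lt1 fds) → aux (lt1 ++ lt2) fds) ∧
    (∀ (lt1 lt2 : List Ev),
      everyRequestGetsAResponse lt1 → everyRequestGetsAResponse lt2 →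
      proc lt1 [] = [] → everyRequestGetsAResponse (lt1 ++ lt2)) := by
  have h : ∀ (lt1 lt2 : List Ev) (fds : List ℕ),
      aux lt2 (proc lt1 fds) → aux (lt1 ++ lt2) fds := by
    intro lt1
    induction lt1 with
    | nil => intro lt2 fds h; exact h
    | cons e tl ih =>
      intro lt2 fds h
      cases e <;> simp only [List.cons_append, aux, proc] at * <;> exact ih _ _ h
  refine ⟨h, ?_⟩
  intro lt1 lt2 _ h2 hp
  refine h lt1 lt2 [] ?_
  rw [hp]
  exact h2
end

section
/- If a trace satisfies the every_request_gets_a_response invariant aux lt fds, then every file descriptor in fds is eventually written to in lt: for all fd ∈ fds, there exists an EWrite event on fd in lt. -/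
/-- If the invariant holds starting from pending set `fds`, then every file
descriptor in `fds` is eventually written to in the trace. -/
theorem aux_pending_written (lt : List Ev) (fds : List ℕ) (h : aux lt fds) :
    ∀ fd ∈ fds, Ev.write fd ∈ lt := by
  induction lt, fds using aux.induct with
  | case1 fds =>
    rw [aux] at h
    simp [h]
  | case2 fd' tl fds ih =>
    exact fun fd hfd => List.mem_cons_of_mem _ (ih h fd (List.mem_cons_of_mem _ hfd))
  | case3 fd' tl fds ih =>
    intro fd hfd
    by_cases hfd' : fd' = fd
    · simp [hfd']
    · exact List.mem_cons_of_mem _ (ih h fd (List.mem_filter.2 ⟨hfd, by simpa using hfd'⟩))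
  | case4 e tl fds not_readOk not_write ih =>
    rw [aux.eq_4 fds e tl not_readOk not_write] at h
    exact fun fd hfd => List.mem_cons_of_mem _ (ih h fd hfd)
end

section
/- If aux lt fds holds, then for every ERead event on fd with successful result occurring at position i in lt, there exists a later position j > i at which an EWrite event on fd occurs (every request in the trace eventually gets a response). -/
/-
A pending descriptor can only leave the pending set through a write to it, and the set must be
empty at the end of the trace; so every pending descriptor is written later on. A successful read
makes its descriptor pending, and the invariant is inherited by every suffix of the trace.
-/

theorem aux_tail {e : Ev} {l : List Ev} {fds : List ℕ} (h : aux (e :: l) fds) :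
    ∃ fds', aux l fds' := by
  cases e <;> exact ⟨_, h⟩

theorem aux_drop {lt : List Ev} {fds : List ℕ} (h : aux lt fds) (n : ℕ) :
    ∃ fds', aux (lt.drop n) fds' := by
  induction n generalizing lt fds with
  | zero => exact ⟨fds, h⟩
  | succ n ih =>
    cases lt with
    | nil => exact ⟨fds, h⟩
    | cons e l =>
      obtain ⟨fds', h'⟩ := aux_tail h
      exact ih h'

theorem write_mem_of_aux_of_mem {lt : List Ev} {fds : List ℕ} (h : aux lt fds) {fd : ℕ}
    (hfd : fd ∈ fds) : Ev.write fd ∈ lt := by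
  induction lt generalizing fds with
  | nil => simp_all [aux]
  | cons e l ih =>
    cases e with
    | readOk fd' => exact List.mem_cons_of_mem _ (ih h (List.mem_cons_of_mem _ hfd))
    | readErr fd' => exact List.mem_cons_of_mem _ (ih h hfd)
    | other => exact List.mem_cons_of_mem _ (ih h hfd)
    | write fd' =>
      by_cases hfd' : fd' = fd
      · simp [hfd']
      · exact List.mem_cons_of_mem _ (ih h (List.mem_filter.2 ⟨hfd, by simpa using hfd'⟩))

theorem write_mem_drop_of_aux_of_readOk {lt : List Ev} {fds : List ℕ} (h : aux lt fds)
    {i : ℕ} (hi : i < lt.length) {fd : ℕ} (hread : lt[i] = Ev.readOk fd) :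
    Ev.write fd ∈ lt.drop (i + 1) := by
  obtain ⟨fds', h'⟩ := aux_drop h i
  rw [List.drop_eq_getElem_cons hi, hread] at h'
  exact write_mem_of_aux_of_mem (fds := fd :: fds') h' List.mem_cons_self

/-- Every successful read in the trace is eventually followed by a write to
the same file descriptor. -/
theorem every_request_gets_eventual_response
    (lt : List Ev) (fds : List ℕ) (h : aux lt fds) :
    ∀ (i : ℕ) (hi : i < lt.length) (fd : ℕ),
      lt.get ⟨i, hi⟩ = Ev.readOk fd →
      ∃ (j : ℕ) (hj : j < lt.length), i < j ∧ lt.get ⟨j, hj⟩ = Ev.write fd := by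
  intro i hi fd hread
  obtain ⟨k, hk, hwrite⟩ := List.mem_iff_getElem.1 (write_mem_drop_of_aux_of_readOk h hi hread)
  rw [List.length_drop] at hk
  refine ⟨i + 1 + k, by omega, by omega, ?_⟩
  simpa [List.getElem_drop] using hwrite
end
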